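/- Let (X, d_X, f_X) be an augmented metric space and < a total order on X compatible with f_X such that every non-<-least point x ∈ X has a constant conqueror. Then the zeroth component module M of (X, d_X, f_X) is interval decomposable, and M ≅ ⊕_{x ∈ X} I^{I_x^<}; i.e., the barcode of M is the elder-rule staircode {{I_x^< : x ∈ X}}. -/

import Mathlib

open CategoryTheory
open scoped Classical

universe u

/-- We regard the poset `ℝ²` (with the product order) as a category. -/
instance : CategoryTheory.Category (ℝ × ℝ) := Preorder.smallCategory _

section conn

variable {X : Type u} [MetricSpace X]

/-- One step of an `ε`-chain inside `S`. -/
def chainRel (S : Set X) (ε : ℝ) (a b : X) : Prop :=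
  a ∈ S ∧ b ∈ S ∧ dist a b ≤ ε

/-- `x` and `y` are `ε`-connected in `S`: there is a finite chain from `x` to `y` inside `S`
whose consecutive points are at distance at most `ε`. -/
def epsConn (S : Set X) (ε : ℝ) (x y : X) : Prop :=
  x ∈ S ∧ y ∈ S ∧ Relation.ReflTransGen (chainRel S ε) x y

/-- The sublevel set `X_σ` of `f`. -/
def sublevel (f : X → ℝ) (σ : ℝ) : Set X := {x | f x ≤ σ}

lemma epsConn_refl {S : Set X} {ε : ℝ} {x : X} (hx : x ∈ S) : epsConn S ε x x :=
  ⟨hx, hx, Relation.ReflTransGen.refl⟩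

lemma epsConn_symm {S : Set X} {ε : ℝ} {x y : X} (h : epsConn S ε x y) :
    epsConn S ε y x := by
  obtain ⟨hx, hy, hc⟩ := h
  refine ⟨hy, hx, ?_⟩
  have hsym : Symmetric (chainRel S ε) := by
    rintro a b ⟨ha, hb, hd⟩
    exact ⟨hb, ha, by rwa [dist_comm]⟩
  clear hx hy
  induction hc with
  | refl => exact Relation.ReflTransGen.refl
  | tail _ hbc ih => exact Relation.ReflTransGen.head (hsym hbc) ih

lemma epsConn_trans {S : Set X} {ε : ℝ} {x y z : X}
    (h1 : epsConn S ε x y) (h2 : epsConn S ε y z) : epsConn S ε x z :=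
  ⟨h1.1, h2.2.1, h1.2.2.trans h2.2.2⟩

lemma epsConn_mono {f : X → ℝ} {σ σ' ε ε' : ℝ} (hσ : σ ≤ σ') (hε : ε ≤ ε') {x y : X}
    (h : epsConn (sublevel f σ) ε x y) : epsConn (sublevel f σ') ε' x y := by
  obtain ⟨hx, hy, hc⟩ := h
  refine ⟨le_trans hx hσ, le_trans hy hσ, ?_⟩
  have hr : ∀ a b, chainRel (sublevel f σ) ε a b → chainRel (sublevel f σ') ε' a b := by
    rintro a b ⟨ha, hb, hd⟩
    exact ⟨le_trans ha hσ, le_trans hb hσ, le_trans hd hε⟩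
  clear hx hy
  induction hc with
  | refl => exact Relation.ReflTransGen.refl
  | tail _ hbc ih => exact ih.tail (hr _ _ hbc)

/-- The `ε`-connectedness class of `x` in the sublevel set `X_σ`. -/
def connClass (f : X → ℝ) (σ ε : ℝ) (x : X) : Set X :=
  {y | epsConn (sublevel f σ) ε x y}

/-- The set of `ε`-connectedness classes of the sublevel set `X_σ` (empty when `ε < 0`). -/
def classes (f : X → ℝ) (σ ε : ℝ) : Set (Set X) :=
  {C | 0 ≤ ε ∧ ∃ x, f x ≤ σ ∧ C = connClass f σ ε x}

lemma connClass_eq {f : X → ℝ} {σ ε : ℝ} {x y : X}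
    (h : epsConn (sublevel f σ) ε x y) : connClass f σ ε x = connClass f σ ε y := by
  ext z
  exact ⟨fun hz => epsConn_trans (epsConn_symm h) hz, fun hz => epsConn_trans h hz⟩

end conn

section staircase

variable {X : Type u} [MetricSpace X] [LinearOrder X]

/-- The elder-rule staircase `I_x` of a point `x` of an augmented metric space:
all `(σ, ε)` with `ε ≥ 0` such that `x ∈ X_σ` and `x` is the least element of its
`ε`-connectedness class in `X_σ`. -/
def staircase (f : X → ℝ) (x : X) : Set (ℝ × ℝ) :=
  {p | 0 ≤ p.2 ∧ f x ≤ p.1 ∧ ∀ y, epsConn (sublevel f p.1) p.2 x y → x ≤ y}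

lemma staircase_convex (f : X → ℝ) :
    ∀ x : X, ∀ a ∈ staircase f x, ∀ b ∈ staircase f x, ∀ c, a ≤ c → c ≤ b →
      c ∈ staircase f x := by
  rintro x a ⟨ha0, haf, _⟩ b ⟨_, _, hb⟩ c hac hcb
  exact ⟨le_trans ha0 hac.2, le_trans haf hac.1,
    fun y hy => hb y (epsConn_mono hcb.1 hcb.2 hy)⟩

end staircase

section module

variable {X : Type u} [MetricSpace X] (𝔽 : Type u) [Field 𝔽]

/-- The structure map between the sets of `ε`-connectedness classes, for grades `p ≤ q`. -/
noncomputable def classMap (f : X → ℝ) {p q : ℝ × ℝ} (h : p ≤ q)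
    (C : classes f p.1 p.2) : classes f q.1 q.2 :=
  ⟨connClass f q.1 q.2 C.2.2.choose,
    le_trans C.2.1 h.2, C.2.2.choose, le_trans C.2.2.choose_spec.1 h.1, rfl⟩

lemma classMap_id (f : X → ℝ) (p : ℝ × ℝ) :
    classMap f (le_refl p) = (id : classes f p.1 p.2 → classes f p.1 p.2) := by
  funext C
  apply Subtype.ext
  exact (C.2.2.choose_spec.2).symm

lemma classMap_comp (f : X → ℝ) {p q r : ℝ × ℝ} (hpq : p ≤ q) (hqr : q ≤ r) :
    classMap f (le_trans hpq hqr) = classMap f hqr ∘ classMap f hpq := by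
  funext C
  apply Subtype.ext
  set x := C.2.2.choose with hxdef
  set C' := classMap f hpq C with hC'def
  set x₁ := C'.2.2.choose with hx₁def
  have hx₁spec := C'.2.2.choose_spec
  have hCq : (C' : Set X) = connClass f q.1 q.2 x := rfl
  have hcc : connClass f q.1 q.2 x = connClass f q.1 q.2 x₁ := by
    rw [← hCq]; exact hx₁spec.2
  have hmem : epsConn (sublevel f q.1) q.2 x x₁ := by
    have h1 : x₁ ∈ connClass f q.1 q.2 x₁ := epsConn_refl hx₁spec.1
    rw [← hcc] at h1
    exact h1
  exact connClass_eq (epsConn_mono hqr.1 hqr.2 hmem)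

/-- The zeroth component module of an augmented metric space `(X, d_X, f)`, as a functor
`ℝ² ⥤ Vec_𝔽`: at grade `(σ, ε)` it is the free `𝔽`-vector space on the set of
`ε`-connectedness classes of `X_σ` (the zero space when `ε < 0`), with structure maps
sending each class to the class containing it.  It is isomorphic to the zeroth persistent
homology of the Rips bifiltration of `(X, d_X, f)`. -/
noncomputable def zerothModule (f : X → ℝ) : (ℝ × ℝ) ⥤ ModuleCat.{u} 𝔽 where
  obj p := ModuleCat.of 𝔽 ((classes f p.1 p.2) →₀ 𝔽)
  map {p q} h := ModuleCat.ofHom (Finsupp.lmapDomain 𝔽 𝔽 (classMap f h.le))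
  map_id p := by
    ext1
    show Finsupp.lmapDomain 𝔽 𝔽 (classMap f (le_refl p)) = _
    rw [classMap_id, Finsupp.lmapDomain_id]
    rfl
  map_comp {p q r} hpq hqr := by
    ext1
    show Finsupp.lmapDomain 𝔽 𝔽 (classMap f (le_trans hpq.le hqr.le)) = _
    rw [classMap_comp f hpq.le hqr.le, Finsupp.lmapDomain_comp]
    rfl

/-- The direct sum `⊕ᵢ I^{J i}` of the interval modules supported on the (convex) subsets
`J i` of a poset `P`, as a functor `P ⥤ Vec_𝔽`.  At `p` its value is (canonically isomorphic
to) the direct sum of one copy of `𝔽` for every `i` with `p ∈ J i`, and the structure maps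
are identities on the summands supported at both endpoints, and zero otherwise. -/
noncomputable def sumIntervalModule {P : Type} [Preorder P]
    {ι : Type u} (J : ι → Set P)
    (hJ : ∀ i, ∀ a ∈ J i, ∀ b ∈ J i, ∀ c, a ≤ c → c ≤ b → c ∈ J i) :
    P ⥤ ModuleCat.{u} 𝔽 where
  obj p := ModuleCat.of 𝔽 (∀ i : ι, PLift (p ∈ J i) → 𝔽)
  map {p q} h := ModuleCat.ofHom
    { toFun := fun g i _ => if hp : p ∈ J i then g i ⟨hp⟩ else 0
      map_add' := by
        intro g₁ g₂
        funext i hq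
        show (if hp : p ∈ J i then (g₁ + g₂) i ⟨hp⟩ else 0)
            = (if hp : p ∈ J i then g₁ i ⟨hp⟩ else 0) + (if hp : p ∈ J i then g₂ i ⟨hp⟩ else 0)
        by_cases hp : p ∈ J i
        · simp only [dif_pos hp]; rfl
        · simp only [dif_neg hp]; rw [add_zero]
      map_smul' := by
        intro c g
        funext i hq
        show (if hp : p ∈ J i then (c • g) i ⟨hp⟩ else 0)
            = c • (if hp : p ∈ J i then g i ⟨hp⟩ else 0)
        by_cases hp : p ∈ J i
        · simp only [dif_pos hp]; rfl
        · simp only [dif_neg hp]; rw [smul_zero] }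
  map_id p := by
    refine ModuleCat.hom_ext (LinearMap.ext fun g => ?_)
    funext i hq
    show (if hp : p ∈ J i then g i ⟨hp⟩ else 0) = g i hq
    rw [dif_pos hq.down]
  map_comp {p q r} hpq hqr := by
    refine ModuleCat.hom_ext (LinearMap.ext fun g => ?_)
    funext i hr
    show (if hp : p ∈ J i then g i ⟨hp⟩ else 0)
        = (if hq : q ∈ J i then (if hp : p ∈ J i then g i ⟨hp⟩ else 0) else 0)
    by_cases hp : p ∈ J i
    · have hq : q ∈ J i := hJ i p hp r hr.down q hpq.le hqr.le
      simp only [dif_pos hp, dif_pos hq]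
    · by_cases hq : q ∈ J i
      · simp only [dif_neg hp, dif_pos hq]
      · simp only [dif_neg hp, dif_neg hq]

end module

section conqueror

variable {X : Type u} [MetricSpace X]

/-- `u^σ(x, y)`: the minimal `ε ≥ 0` such that `x` and `y` are `ε`-connected in `X_σ`. -/
noncomputable def uConn (f : X → ℝ) (σ : ℝ) (x y : X) : ℝ :=
  sInf {ε : ℝ | 0 ≤ ε ∧ epsConn (sublevel f σ) ε x y}

variable [LinearOrder X]

/-- `x'` is a `<`-conqueror of `x` in `(X_σ, d_X)`. -/
def IsConqueror (f : X → ℝ) (σ : ℝ) (x x' : X) : Prop :=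
  x' < x ∧ ∀ x'', x'' < x → uConn f σ x x' ≤ uConn f σ x x''

end conqueror


/-! ### Auxiliary development for the main theorem -/

section auxdev

variable {X : Type u} [MetricSpace X]

lemma chainRel_mono {S : Set X} {ε ε' : ℝ} (h : ε ≤ ε') {a b : X}
    (hab : chainRel S ε a b) : chainRel S ε' a b :=
  ⟨hab.1, hab.2.1, hab.2.2.trans h⟩

lemma round_aux {S : Set X} {ε : ℝ} {x y : X}
    (h : Relation.ReflTransGen (chainRel S ε) x y) :
    ∃ ε₀, ε₀ ≤ max ε 0 ∧ 0 ≤ ε₀ ∧ (ε₀ = 0 ∨ ∃ a b : X, ε₀ = dist a b) ∧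
      Relation.ReflTransGen (chainRel S ε₀) x y := by
  induction h with
  | refl => exact ⟨0, le_max_right _ _, le_refl _, Or.inl rfl, Relation.ReflTransGen.refl⟩
  | @tail b c hbc hstep ih =>
    obtain ⟨ε₀, h1, h2, h3, h4⟩ := ih
    refine ⟨max ε₀ (dist b c), max_le h1 (le_trans hstep.2.2 (le_max_left ε 0)),
      le_trans h2 (le_max_left _ _), ?_, ?_⟩
    · rcases max_choice ε₀ (dist b c) with hmc | hmc
      · rw [hmc]; exact h3
      · rw [hmc]; exact Or.inr ⟨_, _, rfl⟩
    · exact (Relation.ReflTransGen.mono (fun a b hab => chainRel_mono (le_max_left _ _) hab) _ _ h4).tail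
        ⟨hstep.1, hstep.2.1, le_max_right _ _⟩

variable [Fintype X]

omit [Fintype X] in
lemma uConn_le' (f : X → ℝ) {σ ε : ℝ} {x y : X} (hε : 0 ≤ ε)
    (hc : epsConn (sublevel f σ) ε x y) : uConn f σ x y ≤ ε :=
  csInf_le ⟨0, fun _ ha => ha.1⟩ ⟨hε, hc⟩

lemma epsConn_of_uConn_le (f : X → ℝ) {σ ε : ℝ} {x y : X} (hx : f x ≤ σ) (hy : f y ≤ σ)
    (hε : 0 ≤ ε) (h : uConn f σ x y ≤ ε) : epsConn (sublevel f σ) ε x y := by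
  classical
  set A := {ε' : ℝ | 0 ≤ ε' ∧ epsConn (sublevel f σ) ε' x y} with hA
  have hround : ∀ ε' ∈ A, ∃ ε₀ ∈ A,
      ε₀ ∈ (insert (0:ℝ) ((Finset.univ : Finset (X × X)).image fun p => dist p.1 p.2)) ∧ ε₀ ≤ ε' := by
    rintro ε' ⟨h0, hx', hy', hc⟩
    obtain ⟨ε₀, h1, h2, h3, h4⟩ := round_aux hc
    rw [max_eq_left h0] at h1
    refine ⟨ε₀, ⟨h2, hx', hy', h4⟩, ?_, h1⟩
    rcases h3 with h3 | ⟨a, b, h3⟩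
    · rw [h3]; exact Finset.mem_insert_self _ _
    · rw [h3]
      exact Finset.mem_insert_of_mem (Finset.mem_image.2 ⟨(a, b), Finset.mem_univ _, rfl⟩)
  have hAne : A.Nonempty :=
    ⟨dist x y, dist_nonneg, hx, hy, Relation.ReflTransGen.single ⟨hx, hy, le_refl _⟩⟩
  set T := (insert (0:ℝ) ((Finset.univ : Finset (X × X)).image fun p => dist p.1 p.2)).filter
    (· ∈ A) with hT
  have hTne : T.Nonempty := by
    obtain ⟨ε₁, hε₁⟩ := hAne
    obtain ⟨ε₀, h₀A, h₀D, _⟩ := hround ε₁ hε₁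
    exact ⟨ε₀, Finset.mem_filter.2 ⟨h₀D, h₀A⟩⟩
  have hmin : T.min' hTne ∈ A := (Finset.mem_filter.1 (T.min'_mem hTne)).2
  have hlb : ∀ ε' ∈ A, T.min' hTne ≤ ε' := by
    intro ε' hε'
    obtain ⟨ε₀, h₀A, h₀D, h₀le⟩ := hround ε' hε'
    exact le_trans (T.min'_le ε₀ (Finset.mem_filter.2 ⟨h₀D, h₀A⟩)) h₀le
  have huc : uConn f σ x y = T.min' hTne :=
    le_antisymm (csInf_le ⟨0, fun _ ha => ha.1⟩ hmin) (le_csInf hAne hlb)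
  have hcon : epsConn (sublevel f σ) (uConn f σ x y) x y := by
    rw [huc]; exact hmin.2
  exact epsConn_mono (le_refl σ) h hcon

variable [LinearOrder X]

lemma exists_least (f : X → ℝ) {p : ℝ × ℝ} (hε : 0 ≤ p.2) {x : X} (hx : f x ≤ p.1) :
    ∃ m : X, epsConn (sublevel f p.1) p.2 x m ∧ p ∈ staircase f m := by
  classical
  set T := Finset.univ.filter (fun y => epsConn (sublevel f p.1) p.2 x y) with hT
  have hxT : x ∈ T := Finset.mem_filter.2 ⟨Finset.mem_univ x, epsConn_refl hx⟩
  have hTne : T.Nonempty := ⟨x, hxT⟩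
  have hmem : epsConn (sublevel f p.1) p.2 x (T.min' hTne) :=
    (Finset.mem_filter.1 (T.min'_mem hTne)).2
  refine ⟨T.min' hTne, hmem, hε, hmem.2.1, ?_⟩
  intro y hy
  exact T.min'_le y (Finset.mem_filter.2 ⟨Finset.mem_univ y, epsConn_trans hmem hy⟩)

omit [Fintype X] in
lemma least_unique (f : X → ℝ) {p : ℝ × ℝ} {x y : X} (hx : p ∈ staircase f x)
    (hy : p ∈ staircase f y) (h : connClass f p.1 p.2 x = connClass f p.1 p.2 y) : x = y := by
  have h1 : epsConn (sublevel f p.1) p.2 x y := by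
    have hyy : y ∈ connClass f p.1 p.2 y := epsConn_refl hy.2.1
    rw [← h] at hyy
    exact hyy
  exact le_antisymm (hx.2.2 y h1) (hy.2.2 x (epsConn_symm h1))

omit [Fintype X] [LinearOrder X] in
lemma classMap_coe (f : X → ℝ) {p q : ℝ × ℝ} (hpq : p ≤ q) (C : classes f p.1 p.2)
    {x : X} (hx : f x ≤ p.1) (hC : (C : Set X) = connClass f p.1 p.2 x) :
    (classMap f hpq C : Set X) = connClass f q.1 q.2 x := by
  have h1 : epsConn (sublevel f p.1) p.2 C.2.2.choose x := by
    have hxx : x ∈ connClass f p.1 p.2 x := epsConn_refl hx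
    rw [← hC, C.2.2.choose_spec.2] at hxx
    exact hxx
  show connClass f q.1 q.2 C.2.2.choose = connClass f q.1 q.2 x
  exact connClass_eq (epsConn_mono hpq.1 hpq.2 h1)

end auxdev

section psidev

variable {X : Type u} [Fintype X] [MetricSpace X] [LinearOrder X]

/-- The class of `x` as an element of `classes`. -/
def clsOf (f : X → ℝ) (p : ℝ × ℝ) (x : X) (hε : 0 ≤ p.2) (hx : f x ≤ p.1) :
    classes f p.1 p.2 :=
  ⟨connClass f p.1 p.2 x, hε, x, hx, rfl⟩

variable (𝔽 : Type u) [Field 𝔽]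

/-- The image of the generator of the `x` summand. -/
noncomputable def vv (f : X → ℝ) (c : X → X) (hcf : ∀ x, f (c x) ≤ f x) (p : ℝ × ℝ) (x : X)
    (h : p ∈ staircase f x) : classes f p.1 p.2 →₀ 𝔽 :=
  Finsupp.single (clsOf f p x h.1 h.2.1) 1 -
    if c x < x then Finsupp.single (clsOf f p (c x) h.1 (le_trans (hcf x) h.2.1)) 1 else 0

/-- The grade-`p` component of the natural map from the interval sum to the zeroth module. -/
noncomputable def psi (f : X → ℝ) (c : X → X) (hcf : ∀ x, f (c x) ≤ f x) (p : ℝ × ℝ) :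
    (∀ x : X, PLift (p ∈ staircase f x) → 𝔽) →ₗ[𝔽] (classes f p.1 p.2 →₀ 𝔽) where
  toFun g := ∑ x : X, if h : p ∈ staircase f x then g x ⟨h⟩ • vv 𝔽 f c hcf p x h else 0
  map_add' g₁ g₂ := by
    rw [← Finset.sum_add_distrib]
    refine Finset.sum_congr rfl fun x _ => ?_
    by_cases h : p ∈ staircase f x
    · simp only [dif_pos h, Pi.add_apply, add_smul]
    · simp only [dif_neg h, add_zero]
  map_smul' a g := by
    rw [RingHom.id_apply, Finset.smul_sum]
    refine Finset.sum_congr rfl fun x _ => ?_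
    by_cases h : p ∈ staircase f x
    · simp only [dif_pos h, Pi.smul_apply, smul_smul, smul_eq_mul]
    · simp only [dif_neg h, smul_zero]

lemma psi_apply (f : X → ℝ) (c : X → X) (hcf : ∀ x, f (c x) ≤ f x) (p : ℝ × ℝ)
    (g : ∀ x : X, PLift (p ∈ staircase f x) → 𝔽) :
    psi 𝔽 f c hcf p g
      = ∑ x : X, if h : p ∈ staircase f x then g x ⟨h⟩ • vv 𝔽 f c hcf p x h else 0 := rfl

lemma classMap_clsOf (f : X → ℝ) {p q : ℝ × ℝ} (hpq : p ≤ q) (x : X)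
    (hε : 0 ≤ p.2) (hx : f x ≤ p.1) :
    classMap f hpq (clsOf f p x hε hx)
      = clsOf f q x (le_trans hε hpq.2) (le_trans hx hpq.1) :=
  Subtype.ext (classMap_coe f hpq _ hx rfl)

lemma psi_natural (f : X → ℝ) (c : X → X) (hcf : ∀ x, f (c x) ≤ f x)
    (hcq : ∀ x σ, f x ≤ σ → (∃ y, y < x) → IsConqueror f σ x (c x))
    {p q : ℝ × ℝ} (hpq : p ≤ q) (g : ∀ x : X, PLift (p ∈ staircase f x) → 𝔽) :
    Finsupp.lmapDomain 𝔽 𝔽 (classMap f hpq) (psi 𝔽 f c hcf p g)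
      = psi 𝔽 f c hcf q (fun x _ => if hp : p ∈ staircase f x then g x ⟨hp⟩ else 0) := by
  rw [psi_apply, psi_apply, map_sum]
  refine Finset.sum_congr rfl fun x _ => ?_
  by_cases hp : p ∈ staircase f x
  · rw [dif_pos hp, map_smul]
    by_cases hq : q ∈ staircase f x
    · -- the class pushes forward to the class at q
      rw [dif_pos hq, dif_pos hp]
      congr 1
      show Finsupp.lmapDomain 𝔽 𝔽 (classMap f hpq) (vv 𝔽 f c hcf p x hp) = vv 𝔽 f c hcf q x hq
      unfold vv
      rw [map_sub]
      congr 1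
      · rw [Finsupp.lmapDomain_apply, Finsupp.mapDomain_single, classMap_clsOf]
      · by_cases hcx : c x < x
        · rw [if_pos hcx, if_pos hcx, Finsupp.lmapDomain_apply,
            Finsupp.mapDomain_single, classMap_clsOf]
        · rw [if_neg hcx, if_neg hcx, map_zero]
    · -- x is no longer least at q: its class merges with the conqueror's class
      rw [dif_neg hq]
      have hfxq : f x ≤ q.1 := le_trans hp.2.1 hpq.1
      have hεq : 0 ≤ q.2 := le_trans hp.1 hpq.2
      have hex : ∃ y, epsConn (sublevel f q.1) q.2 x y ∧ y < x := by
        by_contra hcon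
        push_neg at hcon
        exact hq ⟨hεq, hfxq, fun y hy => not_lt.1 fun hlt => absurd hlt (not_lt.2 (hcon y hy))⟩
      obtain ⟨y, hyconn, hylt⟩ := hex
      have hconq := hcq x q.1 hfxq ⟨y, hylt⟩
      have hcx : c x < x := hconq.1
      have huy : uConn f q.1 x y ≤ q.2 := uConn_le' f hεq hyconn
      have hucx : uConn f q.1 x (c x) ≤ q.2 := le_trans (hconq.2 y hylt) huy
      have hxcx : epsConn (sublevel f q.1) q.2 x (c x) :=
        epsConn_of_uConn_le f hfxq (le_trans (hcf x) hfxq) hεq hucx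
      have hcls : connClass f q.1 q.2 x = connClass f q.1 q.2 (c x) := connClass_eq hxcx
      have h1 : classMap f hpq (clsOf f p x hp.1 hp.2.1)
          = classMap f hpq (clsOf f p (c x) hp.1 (le_trans (hcf x) hp.2.1)) := by
        rw [classMap_clsOf, classMap_clsOf]
        exact Subtype.ext hcls
      unfold vv
      rw [if_pos hcx, map_sub, Finsupp.lmapDomain_apply, Finsupp.lmapDomain_apply,
        Finsupp.mapDomain_single, Finsupp.mapDomain_single, h1, sub_self, smul_zero]
  · rw [dif_neg hp, map_zero]
    by_cases hq : q ∈ staircase f x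
    · rw [dif_pos hq, dif_neg hp, zero_smul]
    · rw [dif_neg hq]

lemma psi_injective (f : X → ℝ) (c : X → X) (hcf : ∀ x, f (c x) ≤ f x) (p : ℝ × ℝ) :
    Function.Injective (psi 𝔽 f c hcf p) := by
  have key : ∀ g, psi 𝔽 f c hcf p g = 0 → g = 0 := by
    intro g hg
    by_contra hne
    classical
    set S := Finset.univ.filter
      (fun x => ∃ h : p ∈ staircase f x, g x ⟨h⟩ ≠ 0) with hS
    have hSne : S.Nonempty := by
      rcases Finset.eq_empty_or_nonempty S with hemp | hne'
      · exfalso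
        apply hne
        funext x hx
        by_contra hgx
        have : x ∈ S := Finset.mem_filter.2 ⟨Finset.mem_univ x, hx.down, hgx⟩
        rw [hemp] at this
        exact absurd this (Finset.notMem_empty x)
      · exact hne'
    set m := S.max' hSne with hm_def
    obtain ⟨hm, hgm⟩ := (Finset.mem_filter.1 (S.max'_mem hSne)).2
    have heval : (psi 𝔽 f c hcf p g) (clsOf f p m hm.1 hm.2.1) = g m ⟨hm⟩ := by
      rw [psi_apply, Finsupp.finset_sum_apply]
      rw [Finset.sum_eq_single m]
      · rw [dif_pos hm, Finsupp.smul_apply]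
        have hv : (vv 𝔽 f c hcf p m hm) (clsOf f p m hm.1 hm.2.1) = 1 := by
          unfold vv
          rw [Finsupp.sub_apply, Finsupp.single_apply, if_pos rfl]
          have h2 : (if c m < m then
              Finsupp.single (clsOf f p (c m) hm.1 (le_trans (hcf m) hm.2.1)) (1:𝔽)
              else 0) (clsOf f p m hm.1 hm.2.1) = 0 := by
            by_cases hcm : c m < m
            · rw [if_pos hcm, Finsupp.single_apply, if_neg]
              intro hEq
              have hcls : connClass f p.1 p.2 (c m) = connClass f p.1 p.2 m :=
                congrArg Subtype.val hEq
              have hcmem : c m ∈ connClass f p.1 p.2 m := by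
                rw [← hcls]; exact epsConn_refl (le_trans (hcf m) hm.2.1)
              exact absurd (hm.2.2 (c m) hcmem) (not_le.2 hcm)
            · rw [if_neg hcm]; rfl
          rw [h2, sub_zero]
        rw [hv, smul_eq_mul, mul_one]
      · intro x _ hxm
        by_cases hp : p ∈ staircase f x
        · rw [dif_pos hp, Finsupp.smul_apply]
          by_cases hg0 : g x ⟨hp⟩ = 0
          · rw [hg0, zero_smul]
          · have hxS : x ∈ S := Finset.mem_filter.2 ⟨Finset.mem_univ x, hp, hg0⟩
            have hxlt : x < m := lt_of_le_of_ne (S.le_max' x hxS) hxm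
            have hv : (vv 𝔽 f c hcf p x hp) (clsOf f p m hm.1 hm.2.1) = 0 := by
              unfold vv
              rw [Finsupp.sub_apply, Finsupp.single_apply, if_neg, sub_eq_zero]
              · by_cases hcx : c x < x
                · rw [if_pos hcx, Finsupp.single_apply, if_neg]
                  intro hEq
                  have hcls : connClass f p.1 p.2 (c x) = connClass f p.1 p.2 m :=
                    congrArg Subtype.val hEq
                  have hcmem : c x ∈ connClass f p.1 p.2 m := by
                    rw [← hcls]; exact epsConn_refl (le_trans (hcf x) hp.2.1)
                  exact absurd (lt_of_le_of_lt (hm.2.2 (c x) hcmem) (hcx.trans hxlt))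
                    (lt_irrefl m)
                · rw [if_neg hcx]; rfl
              · intro hEq
                exact (lt_irrefl m) (by
                  have := least_unique f hp hm (congrArg Subtype.val hEq)
                  rw [this] at hxlt; exact hxlt)
            rw [hv, smul_zero]
        · rw [dif_neg hp]; rfl
      · intro h; exact absurd (Finset.mem_univ m) h
    rw [hg] at heval
    exact hgm (by simpa using heval.symm)
  intro g₁ g₂ h12
  have : psi 𝔽 f c hcf p (g₁ - g₂) = 0 := by rw [map_sub, h12, sub_self]
  have := key _ this
  exact sub_eq_zero.1 this

lemma psi_surjective (f : X → ℝ) (c : X → X) (hcf : ∀ x, f (c x) ≤ f x) (p : ℝ × ℝ) :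
    Function.Surjective (psi 𝔽 f c hcf p) := by
  classical
  have key : ∀ m : X, ∀ hm : p ∈ staircase f m,
      ∃ g, psi 𝔽 f c hcf p g = Finsupp.single (clsOf f p m hm.1 hm.2.1) 1 := by
    intro m
    induction m using WellFoundedLT.induction with
    | _ m IH =>
    intro hm
    set g₀ : ∀ x : X, PLift (p ∈ staircase f x) → 𝔽 :=
      fun x _ => if x = m then 1 else 0 with hg₀
    have hψ : psi 𝔽 f c hcf p g₀ = vv 𝔽 f c hcf p m hm := by
      rw [psi_apply, Finset.sum_eq_single m]
      · rw [dif_pos hm]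
        simp only [hg₀, if_pos rfl, one_smul]
      · intro x _ hxm
        by_cases hp : p ∈ staircase f x
        · rw [dif_pos hp]
          simp only [hg₀, if_neg hxm, zero_smul]
        · rw [dif_neg hp]
      · intro h; exact absurd (Finset.mem_univ m) h
    by_cases hcm : c m < m
    · have hfcm : f (c m) ≤ p.1 := le_trans (hcf m) hm.2.1
      obtain ⟨m', hconn', hm'⟩ := exists_least f hm.1 hfcm
      have hm'le : m' ≤ c m := hm'.2.2 (c m) (epsConn_symm hconn')
      have hm'lt : m' < m := lt_of_le_of_lt hm'le hcm
      obtain ⟨g₁, hg₁⟩ := IH m' hm'lt hm'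
      refine ⟨g₀ + g₁, ?_⟩
      rw [map_add, hψ, hg₁]
      have hcls : clsOf f p (c m) hm.1 hfcm = clsOf f p m' hm'.1 hm'.2.1 :=
        Subtype.ext (connClass_eq hconn')
      unfold vv
      rw [if_pos hcm, hcls, sub_add_cancel]
    · refine ⟨g₀, ?_⟩
      rw [hψ]
      unfold vv
      rw [if_neg hcm, sub_zero]
  intro u
  induction u using Finsupp.induction_linear with
  | zero => exact ⟨0, map_zero _⟩
  | add u v hu hv =>
    obtain ⟨gu, hgu⟩ := hu
    obtain ⟨gv, hgv⟩ := hv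
    exact ⟨gu + gv, by rw [map_add, hgu, hgv]⟩
  | single C b =>
    obtain ⟨hεC, x₀, hx₀, hC⟩ := C.2
    obtain ⟨m, hconn, hm⟩ := exists_least f hεC hx₀
    have hCm : C = clsOf f p m hm.1 hm.2.1 := by
      apply Subtype.ext
      show (C : Set X) = connClass f p.1 p.2 m
      rw [hC]
      exact connClass_eq hconn
    obtain ⟨g, hg⟩ := key m hm
    refine ⟨b • g, ?_⟩
    rw [map_smul, hg, hCm]
    rw [Finsupp.smul_single, smul_eq_mul, mul_one]

lemma psi_bijective (f : X → ℝ) (c : X → X) (hcf : ∀ x, f (c x) ≤ f x) (p : ℝ × ℝ) :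
    Function.Bijective (psi 𝔽 f c hcf p) :=
  ⟨psi_injective 𝔽 f c hcf p, psi_surjective 𝔽 f c hcf p⟩

end psidev

/-- **Compatibility between the elder-rule staircodes and algebraic decomposition.**
Let `(X, d_X, f_X)` be an augmented metric space and `<` a total order on `X`
compatible with `f_X`, such that every non-least point of `X` has a constant conqueror.
Then the zeroth component module `M` of `(X, d_X, f_X)` is interval decomposable:
it is isomorphic to the direct sum `⊕_{x ∈ X} I^{I_x}` of the interval modules supported
on the elder-rule staircases, i.e. the barcode of `M` is the elder-rule staircode. -/
theorem zerothModule_iso_sum_staircase_of_constant_conquerors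
    (𝔽 : Type u) [Field 𝔽] (X : Type u) [Fintype X] [MetricSpace X] [LinearOrder X]
    (f : X → ℝ)
    (hcompat : ∀ x y : X, f x < f y → x < y)
    (hconq : ∀ x : X, (∃ y, y < x) →
      ∃ x', x' < x ∧ ∀ σ : ℝ, f x ≤ σ → IsConqueror f σ x x') :
    Nonempty (zerothModule 𝔽 f ≅ sumIntervalModule 𝔽 (staircase f) (staircase_convex f)) := by
  classical
  set c : X → X := fun x => if h : ∃ y, y < x then (hconq x h).choose else x with hc_def
  have hcq : ∀ x σ, f x ≤ σ → (∃ y, y < x) → IsConqueror f σ x (c x) := by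
    intro x σ hσ h
    show IsConqueror f σ x (if h' : ∃ y, y < x then (hconq x h').choose else x)
    rw [dif_pos h]
    exact (hconq x h).choose_spec.2 σ hσ
  have hcf : ∀ x, f (c x) ≤ f x := by
    intro x
    show f (if h' : ∃ y, y < x then (hconq x h').choose else x) ≤ f x
    by_cases h : ∃ y, y < x
    · rw [dif_pos h]
      by_contra hlt
      push_neg at hlt
      exact lt_asymm (hconq x h).choose_spec.1 (hcompat _ _ hlt)
    · rw [dif_neg h]
  refine ⟨(NatIso.ofComponents
    (fun p => (LinearEquiv.ofBijective (psi 𝔽 f c hcf p)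
      (psi_bijective 𝔽 f c hcf p)).toModuleIso) ?_).symm⟩
  intro p q hpq
  apply ModuleCat.hom_ext
  apply LinearMap.ext
  intro g
  show psi 𝔽 f c hcf q (fun x _ => if hp : p ∈ staircase f x then g x ⟨hp⟩ else 0)
      = Finsupp.lmapDomain 𝔽 𝔽 (classMap f hpq.le) (psi 𝔽 f c hcf p g)
  exact (psi_natural 𝔽 f c hcf hcq hpq.le g).symm
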